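/- arXiv:2206.06455 — 3 statements merged into one kernel-verified Lean document; each statement's English description precedes it below -/
import Mathlib

section
/- Let p ∈ Y be the solution of ⟨A p, v⟩ = ⟨B u, v⟩ for all v ∈ Y (i.e., p = A⁻¹ B u), and set ‖u‖_S² := ⟨B u, p⟩. Then the norm equivalence inequalities c₁ˢ ‖u‖_X² ≤ ‖u‖_S² ≤ c₂ˢ ‖u‖_X² hold, with c₁ˢ = c₁ᴬ (c₁ᴮ / c₂ᴬ)² and c₂ˢ = (c₂ᴮ)² / c₁ᴬ. -/
/-!
Testing the equation `A p = B u` against `p` gives `⟨B u, p⟩ = ⟨A p, p⟩ ≥ c₁ᴬ ‖p‖²`, so it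
suffices to compare `‖p‖` with `‖u‖` from both sides. From above, `c₁ᴬ ‖p‖² ≤ ⟨B u, p⟩ ≤ c₂ᴮ ‖u‖ ‖p‖`,
and AM-GM turns this into the upper bound. From below, the inf-sup condition reads
`c₁ᴮ ‖u‖ ≤ ‖B u‖ = ‖A p‖ ≤ c₂ᴬ ‖p‖`.
-/

theorem sq_div_le_sq_of_le_mul {t c y : ℝ} (ht : 0 ≤ t) (h : t ≤ c * y) :
    (t / c) ^ 2 ≤ y ^ 2 := by
  rcases eq_or_ne c 0 with rfl | hc
  · simpa using sq_nonneg y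
  · rw [div_pow, div_le_iff₀ (by positivity), ← mul_pow, mul_comm]
    exact pow_le_pow_left₀ ht h 2

theorem le_sq_div_mul_sq_of_mul_sq_le {a b s x y : ℝ} (ha : 0 < a) (hlow : a * y ^ 2 ≤ s)
    (hup : s ≤ b * x * y) : s ≤ b ^ 2 / a * x ^ 2 := by
  rw [div_mul_eq_mul_div, le_div_iff₀ ha]
  nlinarith [sq_nonneg (b * x - a * y)]

theorem StrongDual.iSup_apply_div_norm_le {E : Type*} [NormedAddCommGroup E] [NormedSpace ℝ E]
    (f : StrongDual ℝ E) : ⨆ v : {v : E // v ≠ 0}, f v / ‖(v : E)‖ ≤ ‖f‖ :=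
  Real.iSup_le (fun v ↦ (div_le_div_of_nonneg_right (le_abs_self _) (norm_nonneg _)).trans
    (f.ratio_le_opNorm v)) (norm_nonneg f)

section SchurComplement

variable {X Y : Type*} [NormedAddCommGroup X] [NormedSpace ℝ X]
  [NormedAddCommGroup Y] [NormedSpace ℝ Y]
  {A : Y →L[ℝ] StrongDual ℝ Y} {B : X →L[ℝ] StrongDual ℝ Y} {u : X} {p : Y} {c₁A c₂A c₁B c₂B : ℝ}

theorem mul_norm_sq_le_apply_of_coercive (hA1 : ∀ v : Y, c₁A * ‖v‖ ^ 2 ≤ A v v)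
    (hp : ∀ v : Y, A p v = B u v) : c₁A * ‖p‖ ^ 2 ≤ B u p :=
  hp p ▸ hA1 p

theorem schur_le (hc₁A : 0 < c₁A) (hB2 : ∀ u : X, ‖B u‖ ≤ c₂B * ‖u‖)
    (hA1 : ∀ v : Y, c₁A * ‖v‖ ^ 2 ≤ A v v) (hp : ∀ v : Y, A p v = B u v) :
    B u p ≤ c₂B ^ 2 / c₁A * ‖u‖ ^ 2 := by
  refine le_sq_div_mul_sq_of_mul_sq_le hc₁A (mul_norm_sq_le_apply_of_coercive hA1 hp) ?_
  calc B u p ≤ ‖B u‖ * ‖p‖ := (le_abs_self _).trans ((B u).le_opNorm p)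
    _ ≤ c₂B * ‖u‖ * ‖p‖ := by gcongr; exact hB2 u

theorem le_schur (hc₁A : 0 < c₁A) (hc₁B : 0 < c₁B) (hA2 : ∀ v : Y, ‖A v‖ ≤ c₂A * ‖v‖)
    (hA1 : ∀ v : Y, c₁A * ‖v‖ ^ 2 ≤ A v v)
    (hinfsup : c₁B * ‖u‖ ≤ ⨆ v : {v : Y // v ≠ 0}, B u v / ‖(v : Y)‖)
    (hp : ∀ v : Y, A p v = B u v) :
    c₁A * (c₁B / c₂A) ^ 2 * ‖u‖ ^ 2 ≤ B u p := by
  have hBA : B u = A p := ContinuousLinearMap.ext fun v ↦ (hp v).symm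
  have hu_le_p : c₁B * ‖u‖ ≤ c₂A * ‖p‖ := by
    calc c₁B * ‖u‖ ≤ ‖B u‖ := hinfsup.trans (StrongDual.iSup_apply_div_norm_le _)
      _ ≤ c₂A * ‖p‖ := hBA ▸ hA2 p
  calc c₁A * (c₁B / c₂A) ^ 2 * ‖u‖ ^ 2 = c₁A * (c₁B * ‖u‖ / c₂A) ^ 2 := by ring
    _ ≤ c₁A * ‖p‖ ^ 2 :=
      mul_le_mul_of_nonneg_left (sq_div_le_sq_of_le_mul (by positivity) hu_le_p) hc₁A.le
    _ ≤ B u p := mul_norm_sq_le_apply_of_coercive hA1 hp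

end SchurComplement

/-- Norm equivalence for the Schur complement energy norm `‖u‖_S² = ⟨B u, p⟩`
with `p = A⁻¹ B u`: `c₁ˢ ‖u‖² ≤ ‖u‖_S² ≤ c₂ˢ ‖u‖²`,
where `c₁ˢ = c₁ᴬ (c₁ᴮ / c₂ᴬ)²` and `c₂ˢ = (c₂ᴮ)² / c₁ᴬ`. -/
theorem stmt_3
    {X Y : Type*} [NormedAddCommGroup X] [NormedSpace ℝ X]
    [NormedAddCommGroup Y] [InnerProductSpace ℝ Y]
    (A : Y →L[ℝ] StrongDual ℝ Y) (B : X →L[ℝ] StrongDual ℝ Y)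
    (c₁A c₂A c₁B c₂B : ℝ)
    (hc₁A : 0 < c₁A) (hc₁B : 0 < c₁B)
    (hA2 : ∀ v : Y, ‖A v‖ ≤ c₂A * ‖v‖)
    (hB2 : ∀ u : X, ‖B u‖ ≤ c₂B * ‖u‖)
    (hA1 : ∀ v : Y, c₁A * ‖v‖ ^ 2 ≤ A v v)
    (hinfsup : ∀ u : X, c₁B * ‖u‖ ≤ ⨆ v : {v : Y // v ≠ 0}, B u v / ‖(v : Y)‖)
    (u : X) (p : Y)
    (hp : ∀ v : Y, A p v = B u v) :
    c₁A * (c₁B / c₂A) ^ 2 * ‖u‖ ^ 2 ≤ B u p ∧ B u p ≤ (c₂B ^ 2 / c₁A) * ‖u‖ ^ 2 :=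
  ⟨le_schur hc₁A hc₁B hA2 hA1 (hinfsup u) hp, schur_le hc₁A hB2 hA1 hp⟩
end

section
/- Suppose the target belongs to X, i.e., ū = ι ū₀ with ū₀ ∈ X, and in addition S ū₀ is represented in H, i.e., there exists g ∈ H with ⟨S ū₀, v⟩ = ⟨g, ι v⟩_H for all v ∈ X. Then the solution u_ρ of the regularized variational problem satisfies the energy seminorm estimate ‖u_ρ − ū₀‖_S ≤ ρ^{1/2} ‖g‖_H, where ‖w‖_S = √⟨S w, w⟩. -/
/-!
Testing the variational equation with the error `e = uρ - ū₀` and inserting the representation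
of `S ū₀` gives `ρ ‖e‖_S² + ‖ι e‖² = -ρ ⟪g, ι e⟫ ≤ ρ ‖g‖ ‖ι e‖`. Young's inequality absorbs the
right-hand side into `‖ι e‖²`, leaving `‖e‖_S² ≤ ρ ‖g‖² / 4`.
-/

open scoped RealInnerProductSpace

theorem le_mul_sq_div_four_of_mul_add_sq_le {ρ a b c : ℝ} (hρ : 0 < ρ)
    (h : ρ * a + b ^ 2 ≤ ρ * c * b) : a ≤ ρ * c ^ 2 / 4 := by
  have hyoung : ρ * c * b - b ^ 2 ≤ ρ * (ρ * c ^ 2 / 4) := by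
    nlinarith [sq_nonneg (b - ρ * c / 2)]
  exact le_of_mul_le_mul_left (by linarith) hρ

section RegularizedProblem

variable {H X : Type*} [NormedAddCommGroup H] [InnerProductSpace ℝ H]
  [NormedAddCommGroup X] [NormedSpace ℝ X]
  (ι : X →L[ℝ] H) (S : X →L[ℝ] StrongDual ℝ X) {ρ : ℝ} {uρ u₀ : X} {g : H}

theorem regularized_error_eq
    (hvar : ∀ v : X, ρ * S uρ v + ⟪ι uρ, ι v⟫ = ⟪ι u₀, ι v⟫)
    (hg : ∀ v : X, S u₀ v = ⟪g, ι v⟫) (v : X) :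
    ρ * S (uρ - u₀) v + ⟪ι (uρ - u₀), ι v⟫ = -(ρ * ⟪g, ι v⟫) := by
  rw [map_sub, map_sub, sub_apply, inner_sub_left, ← hg]
  linarith [hvar v]

theorem regularized_energy_le
    (hρ : 0 < ρ) (hvar : ∀ v : X, ρ * S uρ v + ⟪ι uρ, ι v⟫ = ⟪ι u₀, ι v⟫)
    (hg : ∀ v : X, S u₀ v = ⟪g, ι v⟫) :
    S (uρ - u₀) (uρ - u₀) ≤ ρ * ‖g‖ ^ 2 / 4 := by
  set e := uρ - u₀
  have herr := regularized_error_eq ι S hvar hg e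
  rw [real_inner_self_eq_norm_sq] at herr
  have hcs : -⟪g, ι e⟫ ≤ ‖g‖ * ‖ι e‖ := (neg_le_abs _).trans (abs_real_inner_le_norm g (ι e))
  refine le_mul_sq_div_four_of_mul_add_sq_le (b := ‖ι e‖) hρ ?_
  nlinarith [mul_le_mul_of_nonneg_left hcs hρ.le]

end RegularizedProblem

theorem stmt_12_general
    {H X : Type*} [NormedAddCommGroup H] [InnerProductSpace ℝ H]
    [NormedAddCommGroup X] [NormedSpace ℝ X]
    (ι : X →L[ℝ] H) (S : X →L[ℝ] StrongDual ℝ X)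
    (ρ : ℝ) (hρ : 0 < ρ) (ubar : H) (uρ : X)
    (hvar : ∀ v : X, ρ * S uρ v + ⟪ι uρ, ι v⟫ = ⟪ubar, ι v⟫)
    (ubar₀ : X) (htarget : ubar = ι ubar₀)
    (g : H) (hg : ∀ v : X, S ubar₀ v = ⟪g, ι v⟫) :
    Real.sqrt (S (uρ - ubar₀) (uρ - ubar₀)) ≤ Real.sqrt ρ * ‖g‖ := by
  subst htarget
  have henergy : S (uρ - ubar₀) (uρ - ubar₀) ≤ ρ * ‖g‖ ^ 2 :=
    (regularized_energy_le ι S hρ hvar hg).trans (by nlinarith [sq_nonneg ‖g‖])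
  calc Real.sqrt (S (uρ - ubar₀) (uρ - ubar₀)) ≤ Real.sqrt (ρ * ‖g‖ ^ 2) :=
        Real.sqrt_le_sqrt henergy
    _ = Real.sqrt ρ * ‖g‖ := by rw [Real.sqrt_mul hρ.le, Real.sqrt_sq (norm_nonneg g)]

/-- If `ū = ι ū₀` and `S ū₀` is represented in `H` by `g`, then
`‖u_ρ − ū₀‖_S ≤ ρ^{1/2} ‖g‖_H`, where `‖w‖_S = √⟨S w, w⟩`. -/
theorem stmt_12
    {H X : Type*} [NormedAddCommGroup H] [InnerProductSpace ℝ H]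
    [NormedAddCommGroup X] [NormedSpace ℝ X]
    (ι : X →L[ℝ] H) (S : X →L[ℝ] StrongDual ℝ X)
    (hsym : ∀ u v : X, S u v = S v u)
    (hpsd : ∀ u : X, 0 ≤ S u u)
    (ρ : ℝ) (hρ : 0 < ρ) (ubar : H) (uρ : X)
    (hvar : ∀ v : X, ρ * S uρ v + ⟪ι uρ, ι v⟫ = ⟪ubar, ι v⟫)
    (ubar₀ : X) (htarget : ubar = ι ubar₀)
    (g : H) (hg : ∀ v : X, S ubar₀ v = ⟪g, ι v⟫) :
    Real.sqrt (S (uρ - ubar₀) (uρ - ubar₀)) ≤ Real.sqrt ρ * ‖g‖ :=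
  stmt_12_general ι S ρ hρ ubar uρ hvar ubar₀ htarget g hg
end

section
/- Let S̃ : X → X* be a continuous linear operator with ⟨S̃ w, w⟩ ≥ 0 for all w ∈ X, let X_h be a subspace of X, and let ũ ∈ X_h satisfy the perturbed Galerkin equation ρ ⟨S̃ ũ, v_h⟩ + ⟨ι ũ, ι v_h⟩_H = ⟨ū, ι v_h⟩_H for all v_h ∈ X_h. Then ‖ι ũ − ū‖_H ≤ ‖ū‖_H. -/
open scoped RealInnerProductSpace

theorem norm_sub_le_norm_of_norm_sq_le_inner {E : Type*} [NormedAddCommGroup E]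
    [InnerProductSpace ℝ E] {x y : E} (h : ‖x‖ ^ 2 ≤ ⟪y, x⟫) : ‖x - y‖ ≤ ‖y‖ := by
  -- `‖x - y‖² = ‖x‖² - 2⟪y, x⟫ + ‖y‖² ≤ ‖y‖² - ‖x‖²`
  have hsq : ‖x - y‖ ^ 2 ≤ ‖y‖ ^ 2 := by
    rw [norm_sub_sq_real, real_inner_comm]
    linarith [sq_nonneg ‖x‖]
  exact (pow_le_pow_iff_left₀ (norm_nonneg _) (norm_nonneg _) two_ne_zero).mp hsq

/-- Stability of the perturbed Galerkin solution: if `S̃` is positive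
semidefinite and `ũ ∈ X_h` solves the perturbed Galerkin equation, then
`‖ι ũ − ū‖_H ≤ ‖ū‖_H`. -/
theorem stmt_16
    {H X : Type*} [NormedAddCommGroup H] [InnerProductSpace ℝ H]
    [NormedAddCommGroup X] [NormedSpace ℝ X]
    (ι : X →L[ℝ] H)
    (Stilde : X →L[ℝ] StrongDual ℝ X)
    (hpsd : ∀ w : X, 0 ≤ Stilde w w)
    (ρ : ℝ) (hρ : 0 < ρ) (ubar : H)
    (Xh : Submodule ℝ X) (ut : X) (hut : ut ∈ Xh)
    (hpert : ∀ vh ∈ Xh, ρ * Stilde ut vh + ⟪ι ut, ι vh⟫ = ⟪ubar, ι vh⟫) :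
    ‖ι ut - ubar‖ ≤ ‖ubar‖ := by
  apply norm_sub_le_norm_of_norm_sq_le_inner
  have htest := hpert ut hut
  have hstab : 0 ≤ ρ * Stilde ut ut := mul_nonneg hρ.le (hpsd ut)
  rw [real_inner_self_eq_norm_sq] at htest
  linarith
end
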